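/- arXiv:1403.5957 — 5 statements merged into one kernel-verified Lean document; each statement's English description precedes it below -/
import Mathlib

section
/- Let (R,m) be a noetherian local ring, E the injective hull of R/m, and for an R-module M let M° = Hom_R(M,E). If M is quasi-reflexive (i.e. the canonical map φ: M → M°° is a pure-essential embedding) and U is a pure submodule of M, then U is also quasi-reflexive. -/
open IsLocalRing Pointwise

universe u v

variable (R : Type u) [CommRing R]

/-- A submodule `A ⊆ B` is pure if for every module `X`, `X ⊗ A → X ⊗ B` is injective. -/
def IsPureSubmodule {B : Type v} [AddCommGroup B] [Module R B] (A : Submodule R B) : Prop :=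
  ∀ (X : Type v) [AddCommGroup X] [Module R X],
    Function.Injective (LinearMap.lTensor X A.subtype)

/-- A linear map is a pure monomorphism if it is injective with pure range. -/
def IsPureMono {M N : Type v} [AddCommGroup M] [Module R M]
    [AddCommGroup N] [Module R N] (f : M →ₗ[R] N) : Prop :=
  Function.Injective f ∧ IsPureSubmodule R (LinearMap.range f)

/-- A submodule `A ⊆ B` is pure-essential if it is pure and for every `X ⊆ B` with
`X ⊓ A = ⊥` and `(X ⊕ A)/X` pure in `B/X`, one has `X = ⊥`. -/
def IsPureEssential {B : Type v} [AddCommGroup B] [Module R B] (A : Submodule R B) : Prop :=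
  IsPureSubmodule R A ∧
    ∀ X : Submodule R B, X ⊓ A = ⊥ → IsPureSubmodule R (A.map X.mkQ) → X = ⊥

/-- An injective linear map is a pure-essential embedding if its range is pure-essential. -/
def IsPureEssentialEmb {M N : Type v} [AddCommGroup M] [Module R M]
    [AddCommGroup N] [Module R N] (f : M →ₗ[R] N) : Prop :=
  Function.Injective f ∧ IsPureEssential R (LinearMap.range f)

/-- `A ⊆ B` is strictly pure-essential if `A` is pure in `B` and every homomorphism out of `B`
restricting to a pure monomorphism on `A` is itself a pure monomorphism. -/
def IsStrictlyPureEssential {B : Type v} [AddCommGroup B] [Module R B]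
    (A : Submodule R B) : Prop :=
  IsPureSubmodule R A ∧
    ∀ (Y : Type v) [AddCommGroup Y] [Module R Y] (f : B →ₗ[R] Y),
      IsPureMono R (f ∘ₗ A.subtype) → IsPureMono R f

/-- `B` is an injective hull of `A` (via some embedding with essential range). -/
def IsInjectiveHull (A : Type v) (B : Type v) [AddCommGroup A] [Module R A]
    [AddCommGroup B] [Module R B] : Prop :=
  Module.Injective R B ∧ ∃ f : A →ₗ[R] B, Function.Injective f ∧
    ∀ X : Submodule R B, X ≠ ⊥ → X ⊓ LinearMap.range f ≠ ⊥

/-- The Matlis evaluation map `M → Hom(Hom(M,E),E)`. -/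
noncomputable def matlisEval (E M : Type v) [AddCommGroup E] [Module R E]
    [AddCommGroup M] [Module R M] : M →ₗ[R] ((M →ₗ[R] E) →ₗ[R] E) :=
  LinearMap.applyₗ

/-- `M` is Matlis-reflexive (w.r.t. `E`). -/
def IsMatlisReflexive (E M : Type v) [AddCommGroup E] [Module R E]
    [AddCommGroup M] [Module R M] : Prop :=
  Function.Bijective (matlisEval R E M)

/-- `M` is quasi-reflexive: the canonical map `M → M°°` is a pure-essential embedding. -/
def IsQuasiReflexive (E M : Type v) [AddCommGroup E] [Module R E]
    [AddCommGroup M] [Module R M] : Prop :=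
  IsPureEssentialEmb R (matlisEval R E M)

/-- The largest radical-full submodule `P(M)` (sum of all `V` with `V = m V`). -/
def radicalFullPart [IsLocalRing R] (M : Type v) [AddCommGroup M] [Module R M] :
    Submodule R M :=
  sSup {V : Submodule R M | V = maximalIdeal R • V}

/-- The largest divisible submodule `D(M)` (w.r.t. non-zerodivisors). -/
def divisiblePart (M : Type v) [AddCommGroup M] [Module R M] : Submodule R M :=
  sSup {V : Submodule R M | ∀ r ∈ nonZeroDivisors R, V ≤ r • V}


section Helpers

open scoped TensorProduct

variable {R}

/-- Any module is cogenerated by `E`. -/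
lemma cogen [IsLocalRing R] {E : Type u} [AddCommGroup E] [Module R E]
    (hInj : Module.Injective R E) {f : (R ⧸ maximalIdeal R) →ₗ[R] E}
    (hf : Function.Injective f)
    {W : Type u} [AddCommGroup W] [Module R W] {w : W} (hw : w ≠ 0) :
    ∃ F : W →ₗ[R] E, F w ≠ 0 := by
  set q : R →ₗ[R] W := LinearMap.toSpanSingleton R W w with hq
  have h1 : q 1 = w := by simp [hq]
  have hker : LinearMap.ker q ≤ maximalIdeal R := by
    intro r hr
    by_contra hrm
    have hu : IsUnit r := not_not.mp
      (by simpa [IsLocalRing.mem_maximalIdeal, mem_nonunits_iff] using hrm)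
    obtain ⟨u, rfl⟩ := hu
    have h0 : (u : R) • w = 0 := hr
    have : w = 0 := by
      have h2 := congrArg (fun x => ((u⁻¹ : Rˣ) : R) • x) h0
      simpa [smul_smul, Units.inv_mul] using h2
    exact hw this
  let g0 : (R ⧸ LinearMap.ker q) →ₗ[R] (R ⧸ maximalIdeal R) :=
    Submodule.mapQ _ _ LinearMap.id hker
  let e := q.quotKerEquivRange
  let g1 : LinearMap.range q →ₗ[R] E := (f ∘ₗ g0) ∘ₗ (e.symm : LinearMap.range q →ₗ[R] _)
  obtain ⟨F, hF⟩ := hInj.out (LinearMap.range q).subtype (Submodule.injective_subtype _) g1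
  refine ⟨F, ?_⟩
  have hwmem : w ∈ LinearMap.range q := ⟨1, h1⟩
  have hFw : F w = g1 ⟨w, hwmem⟩ := hF ⟨w, hwmem⟩
  rw [hFw]
  have hsymm : e.symm ⟨w, hwmem⟩ = Submodule.Quotient.mk 1 := by
    have h2 := q.quotKerEquivRange_symm_apply_image 1 ⟨1, rfl⟩
    have h3 : (⟨q 1, ⟨1, rfl⟩⟩ : LinearMap.range q) = ⟨w, hwmem⟩ := by
      ext; exact h1
    rw [h3] at h2
    simpa [e] using h2
  have hg0 : g0 (Submodule.Quotient.mk (1 : R)) = Submodule.Quotient.mk (1 : R) := rfl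
  have hval : g1 ⟨w, hwmem⟩ = f (Submodule.Quotient.mk (1 : R)) := by
    simp only [g1, LinearMap.comp_apply, LinearEquiv.coe_coe, hsymm, hg0]
  rw [hval]
  intro h0
  have hzero : (Submodule.Quotient.mk (1 : R) : R ⧸ maximalIdeal R) = 0 := by
    apply hf
    rw [h0, map_zero]
  rw [Submodule.Quotient.mk_eq_zero] at hzero
  exact (IsLocalRing.maximalIdeal.isMaximal R).ne_top
    (Ideal.eq_top_of_isUnit_mem _ hzero isUnit_one)

variable {E : Type u} [AddCommGroup E] [Module R E]

lemma lift_lTensor {Y A B : Type u} [AddCommGroup Y] [Module R Y] [AddCommGroup A] [Module R A]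
    [AddCommGroup B] [Module R B] (f : Y →ₗ[R] B →ₗ[R] E) (g : A →ₗ[R] B) :
    (TensorProduct.lift f) ∘ₗ (LinearMap.lTensor Y g)
      = TensorProduct.lift ((LinearMap.lcomp R E g) ∘ₗ f) :=
  TensorProduct.ext' fun y a => by simp

lemma lift_curry' {Y A : Type u} [AddCommGroup Y] [Module R Y] [AddCommGroup A] [Module R A]
    (F : Y ⊗[R] A →ₗ[R] E) : TensorProduct.lift (TensorProduct.curry F) = F :=
  TensorProduct.ext' fun y a => by simp

lemma pureSubmodule_iff {P N : Type u} [AddCommGroup P] [Module R P] [AddCommGroup N] [Module R N]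
    (f : P →ₗ[R] N) (hf : Function.Injective f) :
    IsPureSubmodule R (LinearMap.range f) ↔
      ∀ (Y : Type u) [AddCommGroup Y] [Module R Y],
        Function.Injective (LinearMap.lTensor Y f) := by
  let e : P ≃ₗ[R] LinearMap.range f := LinearEquiv.ofInjective f hf
  have hcomp : (LinearMap.range f).subtype ∘ₗ (e : P →ₗ[R] LinearMap.range f) = f := by
    ext x; simp [e, LinearEquiv.ofInjective_apply]
  constructor
  · intro h Y _ _
    rw [← hcomp, LinearMap.lTensor_comp, LinearMap.coe_comp]
    exact (h Y).comp (LinearEquiv.lTensor Y e).injective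
  · intro h Y _ _
    have hcomp2 : f ∘ₗ (e.symm : LinearMap.range f →ₗ[R] P) = (LinearMap.range f).subtype := by
      ext x
      have h4 : ((LinearMap.range f).subtype ∘ₗ (e : P →ₗ[R] LinearMap.range f)) (e.symm x)
          = f (e.symm x) := by rw [hcomp]
      simpa using h4.symm
    rw [← hcomp2, LinearMap.lTensor_comp, LinearMap.coe_comp]
    exact (h Y).comp (LinearEquiv.lTensor Y e.symm).injective

lemma matlisEval_apply' {M : Type u} [AddCommGroup M] [Module R M] (m : M) (F : M →ₗ[R] E) :
    matlisEval R E M m F = F m := rfl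

end Helpers

theorem stmt_0 [IsNoetherianRing R] [IsLocalRing R]
    (E : Type u) [AddCommGroup E] [Module R E]
    (hE : IsInjectiveHull R (R ⧸ maximalIdeal R) E)
    (M : Type u) [AddCommGroup M] [Module R M]
    (hM : IsQuasiReflexive R E M)
    (U : Submodule R M) (hU : IsPureSubmodule R U) :
    IsQuasiReflexive R E U := by
  classical
  obtain ⟨hEinj, f0, hf0, -⟩ := hE
  have cg : ∀ {W : Type u} [AddCommGroup W] [Module R W] {w : W}, w ≠ 0 →
      ∃ F : W →ₗ[R] E, F w ≠ 0 := fun {W} _ _ {w} hw => cogen hEinj hf0 hw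
  obtain ⟨hφMinj, hφMpure, hφMess⟩ := hM
  -- the section `s : U° → M°` of the restriction map, coming from purity of `U`
  obtain ⟨Ev, hEv⟩ := hEinj.out (LinearMap.lTensor (U →ₗ[R] E) U.subtype) (hU _)
    (TensorProduct.lift (LinearMap.id : (U →ₗ[R] E) →ₗ[R] (U →ₗ[R] E)))
  set s : (U →ₗ[R] E) →ₗ[R] (M →ₗ[R] E) := TensorProduct.curry Ev with hsdef
  have hs : ∀ (H : U →ₗ[R] E) (u : U), s H (U.subtype u) = H u := by
    intro H u
    have h1 := hEv (H ⊗ₜ u)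
    simpa [hsdef] using h1
  -- dual and double-dual maps of the inclusion
  set iD : (M →ₗ[R] E) →ₗ[R] (U →ₗ[R] E) := LinearMap.lcomp R E U.subtype with hiDdef
  set iDD : ((U →ₗ[R] E) →ₗ[R] E) →ₗ[R] ((M →ₗ[R] E) →ₗ[R] E) := LinearMap.lcomp R E iD
    with hiDDdef
  set sD : ((M →ₗ[R] E) →ₗ[R] E) →ₗ[R] ((U →ₗ[R] E) →ₗ[R] E) := LinearMap.lcomp R E s
    with hsDdef
  have hIDs : ∀ H, iD (s H) = H := fun H => LinearMap.ext fun u => hs H u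
  have hsdidd : ∀ η, sD (iDD η) = η := by
    intro η
    ext H
    have h1 : sD (iDD η) H = η (iD (s H)) := rfl
    rw [h1, hIDs]
  have hsdφ : ∀ u : U, sD (matlisEval R E M (U.subtype u)) = matlisEval R E U u := by
    intro u
    ext H
    have h1 : sD (matlisEval R E M (U.subtype u)) H = s H (U.subtype u) := rfl
    rw [h1, hs]
    rfl
  -- injectivity of the evaluation map on U
  have hφUinj : Function.Injective (matlisEval R E U) := by
    rw [injective_iff_map_eq_zero]
    intro u hu
    by_contra hne
    obtain ⟨F, hF⟩ := cg hne
    apply hF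
    have h2 : matlisEval R E U u F = 0 := by rw [hu]; rfl
    exact h2
  -- purity of the evaluation map on U
  have hφUtensorinj : ∀ (Y : Type u) [AddCommGroup Y] [Module R Y],
      Function.Injective (LinearMap.lTensor Y (matlisEval R E U)) := by
    intro Y _ _
    rw [injective_iff_map_eq_zero]
    intro t ht
    by_contra ht0
    obtain ⟨F, hF⟩ := cg ht0
    apply hF
    have h1 : (LinearMap.lcomp R E (matlisEval R E U)) ∘ₗ
        (LinearMap.applyₗ ∘ₗ TensorProduct.curry F) = TensorProduct.curry F := by
      ext y u; rfl
    calc F t = TensorProduct.lift (TensorProduct.curry F) t := by rw [lift_curry']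
      _ = TensorProduct.lift ((LinearMap.lcomp R E (matlisEval R E U)) ∘ₗ
            (LinearMap.applyₗ ∘ₗ TensorProduct.curry F)) t := by rw [h1]
      _ = (TensorProduct.lift (LinearMap.applyₗ ∘ₗ TensorProduct.curry F) ∘ₗ
            LinearMap.lTensor Y (matlisEval R E U)) t := by rw [lift_lTensor]
      _ = TensorProduct.lift (LinearMap.applyₗ ∘ₗ TensorProduct.curry F)
            (LinearMap.lTensor Y (matlisEval R E U) t) := rfl
      _ = 0 := by rw [ht, map_zero]
  have hφUpure : IsPureSubmodule R (LinearMap.range (matlisEval R E U)) :=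
    (pureSubmodule_iff _ hφUinj).mpr hφUtensorinj
  refine ⟨hφUinj, hφUpure, ?_⟩
  -- the pure-essential condition
  intro X hX hXq
  set X' : Submodule R ((M →ₗ[R] E) →ₗ[R] E) := X.map iDD with hX'def
  have hiDDinj : Function.Injective iDD := Function.LeftInverse.injective hsdidd
  -- condition (a) : X' ⊓ range φ_M = ⊥
  have ha : X' ⊓ LinearMap.range (matlisEval R E M) = ⊥ := by
    rw [eq_bot_iff]
    intro z hz
    obtain ⟨hz1, hz2⟩ := Submodule.mem_inf.mp hz
    obtain ⟨η, hη, rfl⟩ := hz1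
    obtain ⟨m, hm⟩ := hz2
    -- hm : φM m = iDD η ; first show m ∈ U
    have hmU : m ∈ U := by
      by_contra hmU
      have hne : U.mkQ m ≠ 0 := by
        intro h0
        exact hmU ((Submodule.Quotient.mk_eq_zero U).mp (by simpa using h0))
      obtain ⟨G, hG⟩ := cg hne
      apply hG
      have h6 : iD (G ∘ₗ U.mkQ) = 0 := by
        ext u
        have h7 : U.mkQ (U.subtype u) = 0 := (Submodule.Quotient.mk_eq_zero U).mpr u.2
        have h8 : iD (G ∘ₗ U.mkQ) u = G (U.mkQ (U.subtype u)) := rfl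
        rw [h8, h7, map_zero]
        rfl
      calc G (U.mkQ m) = matlisEval R E M m (G ∘ₗ U.mkQ) := rfl
        _ = iDD η (G ∘ₗ U.mkQ) := by rw [hm]
        _ = η (iD (G ∘ₗ U.mkQ)) := rfl
        _ = 0 := by rw [h6, map_zero]
    have hηval : η = matlisEval R E U ⟨m, hmU⟩ := by
      ext H
      have e1 : η (iD (s H)) = iDD η (s H) := rfl
      have e2 : iDD η (s H) = matlisEval R E M m (s H) := by rw [hm]
      have e3 : matlisEval R E M m (s H) = s H (U.subtype ⟨m, hmU⟩) := rfl
      calc η H = η (iD (s H)) := by rw [hIDs]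
        _ = s H (U.subtype ⟨m, hmU⟩) := by rw [e1, e2, e3]
        _ = H ⟨m, hmU⟩ := hs H ⟨m, hmU⟩
        _ = matlisEval R E U ⟨m, hmU⟩ H := rfl
    have h9 : η ∈ X ⊓ LinearMap.range (matlisEval R E U) :=
      Submodule.mem_inf.mpr ⟨hη, ⟨⟨m, hmU⟩, hηval.symm⟩⟩
    rw [hX, Submodule.mem_bot] at h9
    rw [h9, map_zero]
    exact Submodule.zero_mem ⊥
  -- condition (b) : the image of range φ_M in M°°/X' is pure
  have hb : IsPureSubmodule R ((LinearMap.range (matlisEval R E M)).map X'.mkQ) := by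
    have hψinj : Function.Injective (X'.mkQ ∘ₗ matlisEval R E M) := by
      rw [injective_iff_map_eq_zero]
      intro m hm
      have h1 : matlisEval R E M m ∈ X' := by
        rw [LinearMap.comp_apply] at hm
        exact (Submodule.Quotient.mk_eq_zero X').mp (by simpa using hm)
      have h2 : matlisEval R E M m ∈ X' ⊓ LinearMap.range (matlisEval R E M) :=
        Submodule.mem_inf.mpr ⟨h1, ⟨m, rfl⟩⟩
      rw [ha, Submodule.mem_bot] at h2
      exact hφMinj (by rw [h2, map_zero])
    have hrange : (LinearMap.range (matlisEval R E M)).map X'.mkQ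
        = LinearMap.range (X'.mkQ ∘ₗ matlisEval R E M) := (LinearMap.range_comp _ _).symm
    rw [hrange, pureSubmodule_iff _ hψinj]
    intro Y _ _
    rw [injective_iff_map_eq_zero]
    intro t ht
    by_contra ht0
    -- lTensor φM t lies in the image of Y ⊗ X'
    have ht' : LinearMap.lTensor Y X'.mkQ (LinearMap.lTensor Y (matlisEval R E M) t) = 0 := by
      rw [← LinearMap.lTensor_comp_apply]
      exact ht
    have hexact := lTensor_exact Y (LinearMap.exact_subtype_mkQ X') (Submodule.mkQ_surjective X')
    obtain ⟨w, hw⟩ := (hexact _).mp ht'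
    -- the key vanishing principle
    have key : ∀ (D : Y →ₗ[R] (((M →ₗ[R] E) →ₗ[R] E) →ₗ[R] E)),
        (∀ (y : Y) (ξ : (M →ₗ[R] E) →ₗ[R] E), ξ ∈ X' → D y ξ = 0) →
        TensorProduct.lift ((LinearMap.lcomp R E (matlisEval R E M)) ∘ₗ D) t = 0 := by
      intro D hD
      have h1 : TensorProduct.lift ((LinearMap.lcomp R E X'.subtype) ∘ₗ D) = 0 := by
        apply TensorProduct.ext'
        intro y ξ
        have h2 : TensorProduct.lift ((LinearMap.lcomp R E X'.subtype) ∘ₗ D) (y ⊗ₜ ξ)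
            = D y ξ.1 := by simp
        rw [h2, hD y ξ.1 ξ.2]
        rfl
      calc TensorProduct.lift ((LinearMap.lcomp R E (matlisEval R E M)) ∘ₗ D) t
          = (TensorProduct.lift D ∘ₗ LinearMap.lTensor Y (matlisEval R E M)) t := by
            rw [lift_lTensor]
        _ = TensorProduct.lift D (LinearMap.lTensor Y X'.subtype w) := by
            rw [LinearMap.comp_apply, hw]
        _ = TensorProduct.lift ((LinearMap.lcomp R E X'.subtype) ∘ₗ D) w := by
            rw [← lift_lTensor]; rfl
        _ = 0 := by rw [h1]; rfl
    by_cases hc : LinearMap.lTensor Y U.mkQ t = 0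
    · -- t comes from Y ⊗ U; use purity of the image of U°° in U°°/X
      have hexU := lTensor_exact Y (LinearMap.exact_subtype_mkQ U) (Submodule.mkQ_surjective U)
      obtain ⟨t₀, ht₀⟩ := (hexU t).mp hc
      have ht₀0 : t₀ ≠ 0 := fun h => ht0 (by rw [← ht₀, h, map_zero])
      have hq2inj : Function.Injective (X.mkQ ∘ₗ matlisEval R E U) := by
        rw [injective_iff_map_eq_zero]
        intro u hu
        have h1 : matlisEval R E U u ∈ X := by
          rw [LinearMap.comp_apply] at hu
          exact (Submodule.Quotient.mk_eq_zero X).mp (by simpa using hu)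
        have h2 : matlisEval R E U u ∈ X ⊓ LinearMap.range (matlisEval R E U) :=
          Submodule.mem_inf.mpr ⟨h1, ⟨u, rfl⟩⟩
        rw [hX, Submodule.mem_bot] at h2
        exact hφUinj (by rw [h2, map_zero])
      have hrange2 : (LinearMap.range (matlisEval R E U)).map X.mkQ
          = LinearMap.range (X.mkQ ∘ₗ matlisEval R E U) := (LinearMap.range_comp _ _).symm
      have hQinj : Function.Injective (LinearMap.lTensor Y (X.mkQ ∘ₗ matlisEval R E U)) := by
        rw [hrange2] at hXq
        exact (pureSubmodule_iff _ hq2inj).mp hXq Y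
      have hq0ne : LinearMap.lTensor Y (X.mkQ ∘ₗ matlisEval R E U) t₀ ≠ 0 := by
        intro h
        exact ht₀0 (hQinj (by rw [h, map_zero]))
      obtain ⟨G, hG⟩ := cg hq0ne
      set D := (LinearMap.lcomp R E (X.mkQ ∘ₗ sD)) ∘ₗ TensorProduct.curry G with hDdef
      have hDvan : ∀ (y : Y) (ξ : (M →ₗ[R] E) →ₗ[R] E), ξ ∈ X' → D y ξ = 0 := by
        intro y ξ hξ
        obtain ⟨η, hη, rfl⟩ := hξ
        have h7 : X.mkQ (sD (iDD η)) = 0 := by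
          rw [hsdidd]
          exact (Submodule.Quotient.mk_eq_zero X).mpr hη
        have h8 : D y (iDD η) = TensorProduct.curry G y (X.mkQ (sD (iDD η))) := rfl
        rw [h8, h7, map_zero]
      have hcomp3 : (LinearMap.lcomp R E U.subtype) ∘ₗ
          ((LinearMap.lcomp R E (matlisEval R E M)) ∘ₗ D)
          = (LinearMap.lcomp R E (X.mkQ ∘ₗ matlisEval R E U)) ∘ₗ TensorProduct.curry G := by
        ext y u
        have h9 : ((LinearMap.lcomp R E U.subtype) ∘ₗ
            ((LinearMap.lcomp R E (matlisEval R E M)) ∘ₗ D)) y u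
            = TensorProduct.curry G y (X.mkQ (sD (matlisEval R E M (U.subtype u)))) := rfl
        rw [h9, hsdφ]
        rfl
      have hval : TensorProduct.lift ((LinearMap.lcomp R E (matlisEval R E M)) ∘ₗ D) t
          = G (LinearMap.lTensor Y (X.mkQ ∘ₗ matlisEval R E U) t₀) := by
        rw [← ht₀]
        calc TensorProduct.lift ((LinearMap.lcomp R E (matlisEval R E M)) ∘ₗ D)
              (LinearMap.lTensor Y U.subtype t₀)
            = TensorProduct.lift ((LinearMap.lcomp R E U.subtype) ∘ₗ
                ((LinearMap.lcomp R E (matlisEval R E M)) ∘ₗ D)) t₀ := by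
              have h := DFunLike.congr_fun (lift_lTensor
                ((LinearMap.lcomp R E (matlisEval R E M)) ∘ₗ D) U.subtype) t₀
              rw [LinearMap.comp_apply] at h
              exact h
          _ = TensorProduct.lift ((LinearMap.lcomp R E (X.mkQ ∘ₗ matlisEval R E U)) ∘ₗ
                TensorProduct.curry G) t₀ := by rw [hcomp3]
          _ = TensorProduct.lift (TensorProduct.curry G)
                (LinearMap.lTensor Y (X.mkQ ∘ₗ matlisEval R E U) t₀) := by
              have h := DFunLike.congr_fun (lift_lTensor (TensorProduct.curry G)
                (X.mkQ ∘ₗ matlisEval R E U)) t₀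
              rw [LinearMap.comp_apply] at h
              exact h.symm
          _ = G (LinearMap.lTensor Y (X.mkQ ∘ₗ matlisEval R E U) t₀) := by rw [lift_curry']
      exact hG (by rw [← hval, key D hDvan])
    · -- t does not vanish in Y ⊗ (M ⧸ U)
      obtain ⟨F, hF⟩ := cg hc
      set D := (LinearMap.applyₗ : (M →ₗ[R] E) →ₗ[R] ((M →ₗ[R] E) →ₗ[R] E) →ₗ[R] E) ∘ₗ
        (LinearMap.lcomp R E U.mkQ) ∘ₗ TensorProduct.curry F with hDdef
      have hDvan : ∀ (y : Y) (ξ : (M →ₗ[R] E) →ₗ[R] E), ξ ∈ X' → D y ξ = 0 := by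
        intro y ξ hξ
        obtain ⟨η, hη, rfl⟩ := hξ
        have h6 : iD (TensorProduct.curry F y ∘ₗ U.mkQ) = 0 := by
          ext u
          have h7 : U.mkQ (U.subtype u) = 0 := (Submodule.Quotient.mk_eq_zero U).mpr u.2
          have h8 : iD (TensorProduct.curry F y ∘ₗ U.mkQ) u
              = TensorProduct.curry F y (U.mkQ (U.subtype u)) := rfl
          rw [h8, h7, map_zero]
          rfl
        have h9 : D y (iDD η) = η (iD (TensorProduct.curry F y ∘ₗ U.mkQ)) := rfl
        rw [h9, h6, map_zero]
      have hcomp4 : (LinearMap.lcomp R E (matlisEval R E M)) ∘ₗ D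
          = (LinearMap.lcomp R E U.mkQ) ∘ₗ TensorProduct.curry F := by
        ext y m
        rfl
      have hval : TensorProduct.lift ((LinearMap.lcomp R E (matlisEval R E M)) ∘ₗ D) t
          = F (LinearMap.lTensor Y U.mkQ t) := by
        calc TensorProduct.lift ((LinearMap.lcomp R E (matlisEval R E M)) ∘ₗ D) t
            = TensorProduct.lift ((LinearMap.lcomp R E U.mkQ) ∘ₗ TensorProduct.curry F) t := by
              rw [hcomp4]
          _ = TensorProduct.lift (TensorProduct.curry F) (LinearMap.lTensor Y U.mkQ t) := by
              have h := DFunLike.congr_fun (lift_lTensor (TensorProduct.curry F) U.mkQ) t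
              rw [LinearMap.comp_apply] at h
              exact h.symm
          _ = F (LinearMap.lTensor Y U.mkQ t) := by rw [lift_curry']
      exact hF (by rw [← hval, key D hDvan])
  -- conclude
  have hX'bot : X' = ⊥ := hφMess X' ha hb
  rw [eq_bot_iff]
  intro η hη
  have h9 : iDD η ∈ X' := Submodule.mem_map_of_mem hη
  rw [hX'bot, Submodule.mem_bot] at h9
  have h10 : η = 0 := hiDDinj (by rw [h9, map_zero])
  rw [h10]
  exact Submodule.zero_mem ⊥
end

section
/- Let A ⊆ B be a pure extension of R-modules, U ⊆ A a submodule such that A/U is pure-essential in B/U. Then A is pure-essential in B. -/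
open IsLocalRing Pointwise

universe u v

variable (R : Type u) [CommRing R]

/-! Let `X ⊆ B` with `X ⊓ A = ⊥` and `(A + X)/X` pure in `B/X`. Its image `X'` in `B/U` meets
`A/U` trivially because `U ≤ A`, and both `(A/U + X')/X'` in `(B/U)/X'` and the image of `(A + X)/X`
in `(B/X)/((U + X)/X)` are the image of `A` in `B/(U + X)`. Purity passes from `(A + X)/X` to the
latter, since purity survives quotienting by a submodule of the pure submodule, so pure-essentiality
of `A/U` gives `X' = ⊥`, i.e. `X ≤ U ≤ A`, whence `X = X ⊓ A = ⊥`. -/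

section

variable {R}

theorem Submodule.map_mkQ_inf_map_mkQ_eq_bot {M : Type*} [AddCommGroup M] [Module R M]
    {X A U : Submodule R M} (hUA : U ≤ A) (hXA : X ⊓ A = ⊥) :
    X.map U.mkQ ⊓ A.map U.mkQ = ⊥ := by
  apply Submodule.comap_injective_of_surjective U.mkQ_surjective
  rw [Submodule.comap_inf, Submodule.comap_map_mkQ, Submodule.comap_map_mkQ, sup_eq_right.mpr hUA,
    sup_inf_assoc_of_le X hUA, hXA, sup_bot_eq, Submodule.comap_bot, Submodule.ker_mkQ]

namespace IsPureSubmodule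

variable {B : Type v} [AddCommGroup B] [Module R B]

theorem map_linearEquiv_iff {B' : Type v} [AddCommGroup B'] [Module R B'] (e : B ≃ₗ[R] B')
    (A : Submodule R B) : IsPureSubmodule R (A.map (e : B →ₗ[R] B')) ↔ IsPureSubmodule R A := by
  have hsubtype : (A.map (e : B →ₗ[R] B')).subtype ∘ₗ (e.submoduleMap A : A →ₗ[R] _) =
      (e : B →ₗ[R] B') ∘ₗ A.subtype := rfl
  refine forall_congr' fun X => forall_congr' fun _ => forall_congr' fun _ => ?_
  have hcomp : LinearMap.lTensor X (A.map (e : B →ₗ[R] B')).subtype ∘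
      LinearEquiv.lTensor X (e.submoduleMap A) =
      LinearEquiv.lTensor X e ∘ LinearMap.lTensor X A.subtype := by
    have h := congrArg (fun f => ⇑(LinearMap.lTensor X f)) hsubtype
    simp only [LinearMap.lTensor_comp, LinearMap.coe_comp] at h
    exact h
  rw [← EquivLike.injective_comp (LinearEquiv.lTensor X (e.submoduleMap A)), hcomp,
    EquivLike.comp_injective]

theorem map_mkQ {A U : Submodule R B} (hUA : U ≤ A) (h : IsPureSubmodule R A) :
    IsPureSubmodule R (A.map U.mkQ) := by
  intro X _ _
  set π := U.mkQ.submoduleMap A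
  have hπ : (A.map U.mkQ).subtype ∘ₗ π = U.mkQ ∘ₗ A.subtype := rfl
  have hπU : π ∘ₗ Submodule.inclusion hUA = 0 := by
    ext u
    exact (Submodule.Quotient.mk_eq_zero U).mpr u.2
  rw [injective_iff_map_eq_zero]
  intro t ht
  obtain ⟨s, rfl⟩ := LinearMap.lTensor_surjective X (LinearMap.submoduleMap_surjective _ A) t
  -- right exactness of `X ⊗ -` on `0 → U → B → B ⧸ U`
  have hs : LinearMap.lTensor X A.subtype s ∈ LinearMap.range (LinearMap.lTensor X U.subtype) := by
    rw [← lTensor_mkQ, LinearMap.mem_ker, ← LinearMap.comp_apply,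
      ← LinearMap.lTensor_comp, ← hπ, LinearMap.lTensor_comp, LinearMap.comp_apply, ht]
  obtain ⟨u, hu⟩ := hs
  rw [← U.subtype_comp_inclusion A hUA, LinearMap.lTensor_comp, LinearMap.comp_apply] at hu
  rw [← h X hu, ← LinearMap.comp_apply, ← LinearMap.lTensor_comp, hπU, LinearMap.lTensor_zero,
    LinearMap.zero_apply]

theorem map_mkQ_map_mkQ_iff (A S T : Submodule R B) :
    IsPureSubmodule R ((A.map S.mkQ).map (T.map S.mkQ).mkQ) ↔
      IsPureSubmodule R (A.map (S ⊔ T).mkQ) := by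
  have hmap : ((A.map S.mkQ).map (T.map S.mkQ).mkQ).map
      (S.quotientQuotientEquivQuotientSup T : _ →ₗ[R] B ⧸ S ⊔ T) = A.map (S ⊔ T).mkQ := by
    rw [← Submodule.map_comp, ← Submodule.map_comp]
    rfl
  rw [← hmap, map_linearEquiv_iff]

end IsPureSubmodule

end

theorem stmt_1 {B : Type u} [AddCommGroup B] [Module R B]
    (A U : Submodule R B) (hUA : U ≤ A)
    (hpure : IsPureSubmodule R A)
    (hquot : IsPureEssential R (A.map U.mkQ)) :
    IsPureEssential R A := by
  refine ⟨hpure, fun X hXA hXpure => ?_⟩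
  have hX'pure : IsPureSubmodule R ((A.map U.mkQ).map (X.map U.mkQ).mkQ) := by
    rw [IsPureSubmodule.map_mkQ_map_mkQ_iff, sup_comm, ← IsPureSubmodule.map_mkQ_map_mkQ_iff]
    exact hXpure.map_mkQ (Submodule.map_mono hUA)
  have hXU : X ≤ U := by
    rw [← Submodule.ker_mkQ U, LinearMap.le_ker_iff_map]
    exact hquot.2 _ (Submodule.map_mkQ_inf_map_mkQ_eq_bot hUA hXA) hX'pure
  rw [← hXA, left_eq_inf]
  exact hXU.trans hUA
end

section
/- Let (R,m) be a noetherian local ring, M an R-module, U ⊆ M a submodule such that U is reflexive (with respect to Matlis duality) and M/U is quasi-reflexive. Then M is quasi-reflexive. -/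
open IsLocalRing Pointwise

universe u v

variable (R : Type u) [CommRing R]

/-!
Let `q : M°° → (M/U)°°` be the double dual of `M ↠ M/U`. As `E` is injective, `q` is surjective,
and as `U` is reflexive, `ker q` is the image of `U`, hence lies in the image of `M`. Moreover `q`
carries the image of `M` onto the image of `M/U`, which is pure-essential by hypothesis, and
pure-essentiality lifts back along such a surjection. That `M → M°°` is a pure monomorphism holds
for every `M`, because `E` is a cogenerator.
-/

open LinearMap

variable {R}

section Purity

variable {C C' : Type v} [AddCommGroup C] [Module R C] [AddCommGroup C'] [Module R C']

lemma isPureSubmodule_range_of_lTensor_injective {N : Type v} [AddCommGroup N] [Module R N]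
    (f : N →ₗ[R] C)
    (hf : ∀ (X : Type v) [AddCommGroup X] [Module R X], Function.Injective (f.lTensor X)) :
    IsPureSubmodule R (range f) := fun X _ _ =>
  Function.Injective.of_comp_right (g := f.rangeRestrict.lTensor X)
    (by rw [← coe_comp, ← lTensor_comp]; exact hf X)
    (lTensor_surjective X f.surjective_rangeRestrict)

lemma isPureSubmodule_map_of_ker_le (g : C →ₗ[R] C') (hg : Function.Surjective g)
    {A : Submodule R C} (hker : ker g ≤ A) (hA : IsPureSubmodule R A) :
    IsPureSubmodule R (A.map g) := by
  intro X _ _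
  let r : A →ₗ[R] A.map g := g.restrict fun x hx => Submodule.mem_map_of_mem hx
  have hr : Function.Surjective r := by
    rintro ⟨_, x, hx, rfl⟩
    exact ⟨⟨x, hx⟩, rfl⟩
  have hexact : Function.Exact (Submodule.inclusion hker) r := by
    intro x
    simp only [Set.mem_range, Subtype.ext_iff, r, restrict_apply, Submodule.coe_inclusion,
      ZeroMemClass.coe_zero]
    exact ⟨fun hx => ⟨⟨x, hx⟩, rfl⟩, fun ⟨y, hy⟩ => hy ▸ y.2⟩
  exact injective_of_surjective_of_injective_of_right_exact
    ((Submodule.inclusion hker).lTensor X) (r.lTensor X) ((ker g).subtype.lTensor X) (g.lTensor X)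
    LinearMap.id (A.subtype.lTensor X) ((A.map g).subtype.lTensor X)
    (by rw [← lTensor_comp]; rfl) (by rw [← lTensor_comp, ← lTensor_comp]; rfl)
    (lTensor_exact X hexact hr) (lTensor_exact X g.exact_subtype_ker_map hg)
    Function.surjective_id (hA X) (lTensor_surjective X hr)

/-- `q` carries a witness `X` against `S` to a witness `q X` against `q S`, and `q X = ⊥`
forces `X ≤ ker q ≤ S`. -/
theorem isPureEssential_of_map_of_ker_le (q : C →ₗ[R] C') (hq : Function.Surjective q)
    {S : Submodule R C} (hker : ker q ≤ S) (hS : IsPureSubmodule R S)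
    (hqS : IsPureEssential R (S.map q)) : IsPureEssential R S := by
  refine ⟨hS, fun X hXS hXpure => ?_⟩
  have hdisj : X.map q ⊓ S.map q = ⊥ := by
    rw [eq_bot_iff]
    rintro _ ⟨⟨x, hx, rfl⟩, s, hs, hxs⟩
    have hxS : x ∈ S := by
      simpa using S.add_mem (hker (show x - s ∈ ker q by simp [mem_ker, hxs])) hs
    have hx0 : x ∈ X ⊓ S := ⟨hx, hxS⟩
    rw [hXS, Submodule.mem_bot] at hx0
    simp [hx0]
  let qbar := X.mapQ (X.map q) q (Submodule.le_comap_map q X)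
  have hqbar : Function.Surjective qbar := by
    rw [← range_eq_top, Submodule.range_mapQ, range_eq_top.mpr hq, Submodule.map_top,
      Submodule.range_mkQ]
  have hker_qbar : ker qbar ≤ S.map X.mkQ := by
    rw [Submodule.ker_mapQ, Submodule.comap_map_eq, Submodule.map_sup, Submodule.mkQ_map_self,
      bot_sup_eq]
    exact Submodule.map_mono hker
  have hpure : IsPureSubmodule R ((S.map q).map (X.map q).mkQ) := by
    have := isPureSubmodule_map_of_ker_le qbar hqbar hker_qbar hXpure
    rwa [← Submodule.map_comp, Submodule.mapQ_mkQ, Submodule.map_comp] at this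
  have hX : X ≤ S := fun x hx => hker <| by
    simpa [hqS.2 _ hdisj hpure] using Submodule.mem_map_of_mem (f := q) hx
  rwa [inf_eq_left.mpr hX] at hXS

end Purity

section Duality

variable {E M N : Type v} [AddCommGroup E] [Module R E] [AddCommGroup M] [Module R M]
  [AddCommGroup N] [Module R N]

lemma lcomp_surjective_of_injective [Module.Injective R E] {f : M →ₗ[R] N}
    (hf : Function.Injective f) : Function.Surjective (lcomp R E f) := fun g =>
  let ⟨h, hh⟩ := Module.Injective.out f hf g
  ⟨h, LinearMap.ext hh⟩

/-- `ξ` factors through the restriction `M° ↠ U°`, so it is evaluation at some `u ∈ U`. -/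
lemma ker_lcomp_lcomp_mkQ_le_map_matlisEval [Module.Injective R E] (U : Submodule R M)
    (hU : Function.Surjective (matlisEval R E U)) :
    ker (lcomp R E (lcomp R E U.mkQ)) ≤ U.map (matlisEval R E M) := by
  intro ξ hξ
  let res := lcomp R E U.subtype
  have hres : Function.Surjective res := lcomp_surjective_of_injective U.injective_subtype
  have hkerres : ker res ≤ ker ξ := fun f hf => by
    have hUf : U ≤ ker f := fun u hu => LinearMap.congr_fun hf ⟨u, hu⟩
    rw [mem_ker, ← U.liftQ_mkQ f hUf]
    exact LinearMap.congr_fun hξ (U.liftQ f hUf)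
  let ζ := (ker res).liftQ ξ hkerres ∘ₗ (res.quotKerEquivOfSurjective hres).symm.toLinearMap
  have hζ : ∀ f, ζ (res f) = ξ f := fun f => by simp [ζ]
  obtain ⟨u, hu⟩ := hU ζ
  refine ⟨u, u.2, LinearMap.ext fun f => ?_⟩
  rw [← hζ, ← hu]
  rfl

end Duality

section Cogenerator

variable (R) in
def IsCogenerator (E : Type v) [AddCommGroup E] [Module R E] : Prop :=
  ∀ (N : Type v) [AddCommGroup N] [Module R N] (y : N), y ≠ 0 → ∃ g : N →ₗ[R] E, g y ≠ 0

variable {E : Type v} [AddCommGroup E] [Module R E]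

/-- For `y ≠ 0` the map `R ∙ y ≅ R ⧸ ann y ↠ R ⧸ 𝔪 ↪ E` extends to the whole module. -/
lemma isCogenerator_of_injective_residueField [IsLocalRing R] [Module.Injective R E]
    {ι : R ⧸ maximalIdeal R →ₗ[R] E} (hι : Function.Injective ι) : IsCogenerator R E := by
  intro N _ _ y hy
  have htor : Ideal.torsionOf R N y ≤ maximalIdeal R :=
    le_maximalIdeal (by rwa [Ne, Ideal.torsionOf_eq_top_iff])
  let φ : (R ∙ y) →ₗ[R] E := ι ∘ₗ Submodule.factor htor ∘ₗ
    (Ideal.quotTorsionOfEquivSpanSingleton R N y).symm.toLinearMap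
  obtain ⟨g, hg⟩ := Module.Injective.out (R ∙ y).subtype (R ∙ y).injective_subtype φ
  refine ⟨g, fun hgy => ?_⟩
  have hy1 : (Ideal.quotTorsionOfEquivSpanSingleton R N y).symm
      ⟨y, Submodule.mem_span_singleton_self y⟩ = Submodule.Quotient.mk 1 := by
    rw [LinearEquiv.symm_apply_eq, Ideal.quotTorsionOfEquivSpanSingleton_apply_mk, one_smul]
  have h1 : ι (Submodule.Quotient.mk 1) = 0 := by
    simpa [φ, hy1, hgy] using (hg ⟨y, Submodule.mem_span_singleton_self y⟩).symm
  rw [← map_zero ι] at h1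
  exact (maximalIdeal.isMaximal R).ne_top ((Ideal.eq_top_iff_one _).mpr
    ((Submodule.Quotient.mk_eq_zero _).mp (hι h1)))

variable (hE : IsCogenerator R E)
include hE

lemma IsCogenerator.matlisEval_injective (N : Type v) [AddCommGroup N] [Module R N] :
    Function.Injective (matlisEval R E N) := by
  rw [injective_iff_map_eq_zero]
  intro y hy
  by_contra hy0
  obtain ⟨g, hg⟩ := hE N y hy0
  exact hg (LinearMap.congr_fun hy g)

lemma IsCogenerator.lTensor_matlisEval_injective (N X : Type v) [AddCommGroup N] [Module R N]
    [AddCommGroup X] [Module R X] :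
    Function.Injective ((matlisEval R E N).lTensor X) := by
  rw [injective_iff_map_eq_zero]
  intro t ht
  by_contra ht0
  obtain ⟨g, hg⟩ := hE _ t ht0
  -- `g` extends along `X ⊗ N → X ⊗ N°°` by `x ⊗ ξ ↦ ξ (g (x ⊗ ·))`
  let h := TensorProduct.lift (matlisEval R E (N →ₗ[R] E) ∘ₗ TensorProduct.curry g)
  have hgh : h ∘ₗ (matlisEval R E N).lTensor X = g := TensorProduct.ext' fun x n => rfl
  exact hg (by rw [← hgh, comp_apply, ht, map_zero])

lemma IsCogenerator.isPureSubmodule_range_matlisEval (N : Type v) [AddCommGroup N] [Module R N] :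
    IsPureSubmodule R (range (matlisEval R E N)) :=
  isPureSubmodule_range_of_lTensor_injective _ fun X _ _ => hE.lTensor_matlisEval_injective N X

end Cogenerator

theorem stmt_2_general [IsLocalRing R]
    (E : Type u) [AddCommGroup E] [Module R E]
    (hE : IsInjectiveHull R (R ⧸ maximalIdeal R) E)
    (M : Type u) [AddCommGroup M] [Module R M]
    (U : Submodule R M)
    (hU : IsMatlisReflexive R E U)
    (hMU : IsQuasiReflexive R E (M ⧸ U)) :
    IsQuasiReflexive R E M := by
  obtain ⟨hInj, ι, hι, -⟩ := hE
  have hcogen := isCogenerator_of_injective_residueField hι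
  let q := lcomp R E (lcomp R E U.mkQ)
  have hq : Function.Surjective q :=
    lcomp_surjective_of_injective (lcomp_injective_of_surjective _ U.mkQ_surjective)
  have hrange : (range (matlisEval R E M)).map q = range (matlisEval R E (M ⧸ U)) := by
    have hcomm : q ∘ₗ matlisEval R E M = matlisEval R E (M ⧸ U) ∘ₗ U.mkQ := rfl
    rw [← range_comp, hcomm, range_comp_of_range_eq_top _ (range_eq_top.mpr U.mkQ_surjective)]
  refine ⟨hcogen.matlisEval_injective M,
    isPureEssential_of_map_of_ker_le q hq ?_ (hcogen.isPureSubmodule_range_matlisEval M)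
      (hrange ▸ hMU.2)⟩
  exact (ker_lcomp_lcomp_mkQ_le_map_matlisEval U hU.2).trans LinearMap.map_le_range

theorem stmt_2 [IsNoetherianRing R] [IsLocalRing R]
    (E : Type u) [AddCommGroup E] [Module R E]
    (hE : IsInjectiveHull R (R ⧸ maximalIdeal R) E)
    (M : Type u) [AddCommGroup M] [Module R M]
    (U : Submodule R M)
    (hU : IsMatlisReflexive R E U)
    (hMU : IsQuasiReflexive R E (M ⧸ U)) :
    IsQuasiReflexive R E M :=
  stmt_2_general E hE M U hU hMU
end

section
/- Let (R,m) be a noetherian local ring and A a Matlis-reflexive R-module. Then A/P(A) is finitely generated, where P(A) denotes the largest radical-full (divisible: P(A) = m·P(A)) submodule of A. -/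
open IsLocalRing Pointwise

universe u v

variable (R : Type u) [CommRing R]

/-!
Put `B = A/P(A)`. Surjectivity of `M → M°°` passes from `A` to its quotients `B` and `W = B/mB`;
as `W` is a `k`-vector space mapping onto its double dual, `dim W < ∞`, so `B = F + mB` for some
finitely generated `F`. Because `E` is a cogenerator and `B → B°°` is onto, every submodule
`Y ⊆ B°` is the annihilator of `Y^⊥ ⊆ B`. Choosing by Zorn a maximal `Y` containing the socle of
`B°` and meeting `F^⊥` trivially, `V = Y^⊥` satisfies `V = mV` and `F + V = B`. A radical-full
submodule of `A/P(A)` is zero, so `B = F`.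
-/

section

variable {R}

namespace Submodule

section DualPairing

variable {E M : Type*} [AddCommGroup E] [Module R E] [AddCommGroup M] [Module R M]

variable (E) in
def dualAnnihilatorIn (F : Submodule R M) :
    Submodule R (M →ₗ[R] E) :=
  LinearMap.ker (LinearMap.lcomp R E F.subtype)

def dualCoannihilatorIn (Y : Submodule R (M →ₗ[R] E)) : Submodule R M :=
  ⨅ g ∈ Y, LinearMap.ker g

theorem mem_dualAnnihilatorIn {F : Submodule R M} {g : M →ₗ[R] E} :
    g ∈ F.dualAnnihilatorIn E ↔ F ≤ LinearMap.ker g := by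
  simp [dualAnnihilatorIn, LinearMap.ext_iff, SetLike.le_def]

theorem mem_dualCoannihilatorIn {Y : Submodule R (M →ₗ[R] E)} {x : M} :
    x ∈ Y.dualCoannihilatorIn ↔ ∀ g ∈ Y, g x = 0 := by
  simp [dualCoannihilatorIn]

theorem disjoint_torsionBySet_dualAnnihilatorIn {I : Ideal R} {F : Submodule R M}
    (hF : F ⊔ I • ⊤ = ⊤) :
    Disjoint (torsionBySet R (M →ₗ[R] E) I) (F.dualAnnihilatorIn E) := by
  refine disjoint_def.mpr fun g hgI hgF => ?_
  have hIg : I • ⊤ ≤ LinearMap.ker g := smul_le.mpr fun a ha x _ => by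
    rw [LinearMap.mem_ker, map_smul, ← LinearMap.smul_apply,
      (mem_torsionBySet_iff _ _).mp hgI ⟨a, ha⟩, LinearMap.zero_apply]
  exact LinearMap.ker_eq_top.mp <|
    top_le_iff.mp (hF ▸ sup_le (mem_dualAnnihilatorIn.mp hgF) hIg)

end DualPairing

theorem exists_disjoint_of_disjoint_torsionBySet {N : Type*} [AddCommGroup N] [Module R N]
    {I : Ideal R} {G : Submodule R N} (hG : Disjoint (torsionBySet R N I) G) :
    ∃ Y : Submodule R N, Disjoint Y G ∧ ∀ h : N, (∀ a ∈ I, a • h ∈ Y) → h ∈ Y := by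
  set S := {Y : Submodule R N | torsionBySet R N I ≤ Y ∧ Disjoint Y G}
  have hchain : ∀ c ⊆ S, IsChain (· ≤ ·) c → ∀ y ∈ c, ∃ ub ∈ S, ∀ z ∈ c, z ≤ ub := by
    intro c hcS hc y hy
    refine ⟨sSup c, ⟨(hcS hy).1.trans (le_sSup hy), disjoint_def.mpr fun z hz hzG => ?_⟩,
      fun z hz => le_sSup hz⟩
    obtain ⟨Z, hZc, hzZ⟩ := (mem_sSup_of_directed ⟨y, hy⟩ hc.directedOn).mp hz
    exact disjoint_def.mp (hcS hZc).2 z hzZ hzG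
  obtain ⟨Y, -, ⟨hTY, hYG⟩, hYmax⟩ := zorn_le_nonempty₀ S hchain _ ⟨le_rfl, hG⟩
  refine ⟨Y, hYG, fun h hIh => by_contra fun hhY => ?_⟩
  have hnotS : Y ⊔ span R {h} ∉ S := fun hS =>
    hhY (hYmax hS le_sup_left (mem_sup_right (mem_span_singleton_self h)))
  obtain ⟨z, hz, hzG, hz0⟩ : ∃ z ∈ Y ⊔ span R {h}, z ∈ G ∧ z ≠ 0 := by
    by_contra! hno
    exact hnotS ⟨hTY.trans le_sup_left, disjoint_def.mpr hno⟩
  have hIz : ∀ a ∈ I, a • z ∈ Y := by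
    obtain ⟨y, hy, _, hs, rfl⟩ := mem_sup.mp hz
    obtain ⟨r, rfl⟩ := mem_span_singleton.mp hs
    intro a ha
    rw [smul_add, smul_comm a r]
    exact add_mem (Y.smul_mem a hy) (Y.smul_mem r (hIh a ha))
  have hzT : z ∈ torsionBySet R N I := (mem_torsionBySet_iff _ _).mpr fun ⟨a, ha⟩ =>
    disjoint_def.mp hYG _ (hIz a ha) (G.smul_mem a hzG)
  exact hz0 (disjoint_def.mp hYG z (hTY hzT) hzG)

theorem exists_fg_sup_eq_top {M : Type*} [AddCommGroup M] [Module R M] (N : Submodule R M)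
    [Module.Finite R (M ⧸ N)] : ∃ F : Submodule R M, F.FG ∧ F ⊔ N = ⊤ := by
  obtain ⟨n, s, hs⟩ := Module.Finite.exists_fin (R := R) (M := M ⧸ N)
  let t := Function.surjInv N.mkQ_surjective ∘ s
  have hst : N.mkQ ∘ t = s := funext fun i => Function.surjInv_eq N.mkQ_surjective (s i)
  refine ⟨span R (Set.range t), fg_span (Set.finite_range t), ?_⟩
  rw [sup_comm, ← comap_map_mkQ, map_span, ← Set.range_comp, hst, hs, comap_top]

end Submodule

open Submodule

theorem bijective_compRight_of_torsionBySet_le_range {I : Ideal R} {K E M : Type*}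
    [AddCommGroup K] [Module R K] [AddCommGroup E] [Module R E] [AddCommGroup M] [Module R M]
    {ι : K →ₗ[R] E} (hι : Function.Injective ι) (hsoc : torsionBySet R E I ≤ LinearMap.range ι)
    (hM : Module.IsTorsionBySet R M I) :
    Function.Bijective (LinearMap.compRight (M := M) R ι) := by
  refine ⟨fun g₁ g₂ h => LinearMap.ext fun x => hι (LinearMap.congr_fun h x), fun g => ?_⟩
  have hg : ∀ x, g x ∈ LinearMap.range ι := fun x =>
    hsoc <| (mem_torsionBySet_iff _ _).mpr fun a => by rw [← map_smul, @hM x a, map_zero]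
  exact ⟨(LinearEquiv.ofInjective ι hι).symm.toLinearMap ∘ₗ g.codRestrict _ hg,
    LinearMap.ext fun x => by simp⟩

theorem Module.Finite.of_surjective_dual_dual {K V : Type u} [Field K] [AddCommGroup V]
    [Module K V] {f : V →ₗ[K] Module.Dual K (Module.Dual K V)} (hf : Function.Surjective f) :
    Module.Finite K V := by
  by_contra hfin
  have hinf : Cardinal.aleph0 ≤ Module.rank K V :=
    not_lt.mp (mt Module.rank_lt_aleph0_iff.mp hfin)
  have hdual := rank_lt_rank_dual hinf
  have hdual2 := rank_lt_rank_dual (hinf.trans hdual.le)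
  exact (LinearMap.rank_le_of_surjective f hf).not_gt (hdual.trans hdual2)

theorem Module.Finite.of_surjective_restrictScalars_dual_dual {K W : Type u} [Field K]
    [Algebra R K] (hK : Function.Surjective (algebraMap R K)) [AddCommGroup W] [Module R W]
    [Module K W] [IsScalarTower R K W] {f : W →ₗ[R] (W →ₗ[R] K) →ₗ[R] K}
    (hf : Function.Surjective f) : Module.Finite K W := by
  let dual : (W →ₗ[R] K) ≃ₗ[R] Module.Dual K W := LinearMap.extendScalarsOfSurjectiveEquiv hK
  let dualDual : ((W →ₗ[R] K) →ₗ[R] K) ≃ₗ[R] Module.Dual K (Module.Dual K W) :=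
    (dual.arrowCongr (LinearEquiv.refl R K)).trans (LinearMap.extendScalarsOfSurjectiveEquiv hK)
  exact Module.Finite.of_surjective_dual_dual
    (f := (dualDual.toLinearMap ∘ₗ f).extendScalarsOfSurjective hK) (dualDual.surjective.comp hf)

theorem matlisEval_surjective_of_surjective {E M N : Type v} [AddCommGroup E] [Module R E]
    [Module.Injective R E] [AddCommGroup M] [Module R M] [AddCommGroup N] [Module R N]
    {π : M →ₗ[R] N}
    (hπ : Function.Surjective π) (hM : Function.Surjective (matlisEval R E M)) :
    Function.Surjective (matlisEval R E N) := by
  intro φ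
  obtain ⟨ψ, hψ⟩ := Module.Injective.out (LinearMap.lcomp R E π)
    (fun g₁ g₂ hg => LinearMap.ext fun n => by
      obtain ⟨m, rfl⟩ := hπ n
      exact LinearMap.congr_fun hg m) φ
  obtain ⟨m, hm⟩ := hM ψ
  exact ⟨π m, LinearMap.ext fun g => (LinearMap.congr_fun hm _).trans (hψ g)⟩

section Matlis

variable [IsLocalRing R] {E : Type u} [AddCommGroup E] [Module R E]
  {ι : (R ⧸ maximalIdeal R) →ₗ[R] E}

theorem exists_linearMap_apply_ne_zero [Module.Injective R E] (hι : Function.Injective ι)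
    {M : Type u} [AddCommGroup M] [Module R M] {x : M} (hx : x ≠ 0) :
    ∃ g : M →ₗ[R] E, g x ≠ 0 := by
  have hle : Ideal.torsionOf R M x ≤ maximalIdeal R :=
    le_maximalIdeal ((Ideal.torsionOf_eq_top_iff (R := R) x).not.mpr hx)
  let φ : (R ∙ x) →ₗ[R] E :=
    ι ∘ₗ factor hle ∘ₗ (Ideal.quotTorsionOfEquivSpanSingleton R M x).symm.toLinearMap
  obtain ⟨g, hg⟩ := Module.Injective.out (R ∙ x).subtype Subtype.val_injective φ
  have hφ : φ ⟨x, mem_span_singleton_self x⟩ = ι 1 := by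
    have : (Ideal.quotTorsionOfEquivSpanSingleton R M x).symm ⟨x, mem_span_singleton_self x⟩ =
        Submodule.Quotient.mk 1 := by
      rw [LinearEquiv.symm_apply_eq, Ideal.quotTorsionOfEquivSpanSingleton_apply_mk, one_smul]
    simp only [φ, LinearMap.comp_apply, LinearEquiv.coe_coe, this]
    rfl
  refine ⟨g, fun h0 => one_ne_zero (hι ?_)⟩
  rw [← hφ, ← hg, map_zero]
  exact h0

theorem exists_linearMap_apply_ne_zero_of_notMem [Module.Injective R E] (hι : Function.Injective ι)
    {M : Type u} [AddCommGroup M] [Module R M] {U : Submodule R M} {x : M} (hx : x ∉ U) :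
    ∃ g : M →ₗ[R] E, U ≤ LinearMap.ker g ∧ g x ≠ 0 := by
  obtain ⟨g, hg⟩ := exists_linearMap_apply_ne_zero hι (x := U.mkQ x) (by simpa using hx)
  exact ⟨g ∘ₗ U.mkQ, U.ker_mkQ.ge.trans (LinearMap.ker_le_ker_comp _ _), hg⟩

theorem mem_of_dualCoannihilatorIn_le_ker [Module.Injective R E] (hι : Function.Injective ι)
    {B : Type u} [AddCommGroup B] [Module R B] (hB : Function.Surjective (matlisEval R E B))
    {Y : Submodule R (B →ₗ[R] E)} {h : B →ₗ[R] E}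
    (hYh : Y.dualCoannihilatorIn ≤ LinearMap.ker h) : h ∈ Y := by
  by_contra hhY
  obtain ⟨φ, hYφ, hφh⟩ := exists_linearMap_apply_ne_zero_of_notMem hι hhY
  obtain ⟨b, rfl⟩ := hB φ
  exact hφh (hYh (mem_dualCoannihilatorIn.mpr fun g hg => hYφ hg))

theorem exists_eq_smul_sup_eq_top [Module.Injective R E] (hι : Function.Injective ι)
    {B : Type u} [AddCommGroup B] [Module R B] (hB : Function.Surjective (matlisEval R E B))
    (F : Submodule R B) (hF : F ⊔ maximalIdeal R • ⊤ = ⊤) :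
    ∃ V : Submodule R B, V = maximalIdeal R • V ∧ F ⊔ V = ⊤ := by
  obtain ⟨Y, hYF, hYsat⟩ := exists_disjoint_of_disjoint_torsionBySet
    (disjoint_torsionBySet_dualAnnihilatorIn (E := E) hF)
  refine ⟨Y.dualCoannihilatorIn, le_antisymm (fun v hv => by_contra fun hvm => ?_) smul_le_right,
    eq_top_iff.mpr fun b _ => by_contra fun hb => ?_⟩
  · obtain ⟨g, hgm, hgv⟩ := exists_linearMap_apply_ne_zero_of_notMem hι hvm
    refine hgv (mem_dualCoannihilatorIn.mp hv g (hYsat g fun a ha => ?_))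
    refine mem_of_dualCoannihilatorIn_le_ker hι hB fun y hy => ?_
    rw [LinearMap.mem_ker, LinearMap.smul_apply, ← map_smul]
    exact hgm (smul_mem_smul ha hy)
  · obtain ⟨g, hgFV, hgb⟩ := exists_linearMap_apply_ne_zero_of_notMem hι hb
    have hgY : g ∈ Y := mem_of_dualCoannihilatorIn_le_ker hι hB (le_sup_right.trans hgFV)
    have hgF : g ∈ F.dualAnnihilatorIn E := mem_dualAnnihilatorIn.mpr (le_sup_left.trans hgFV)
    rw [disjoint_def.mp hYF g hgY hgF] at hgb
    exact hgb rfl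

theorem torsionBySet_maximalIdeal_le_range
    (hess : ∀ X : Submodule R E, X ≠ ⊥ → X ⊓ LinearMap.range ι ≠ ⊥) :
    torsionBySet R E (maximalIdeal R) ≤ LinearMap.range ι := by
  intro e he
  by_cases he0 : e = 0
  · exact he0 ▸ zero_mem _
  obtain ⟨y, hy, hy0⟩ :=
    exists_mem_ne_zero_of_ne_bot (hess (R ∙ e) (by simpa [span_singleton_eq_bot] using he0))
  obtain ⟨hye, hyι⟩ := mem_inf.mp hy
  obtain ⟨r, rfl⟩ := mem_span_singleton.mp hye
  have hr : IsUnit r := by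
    by_contra hr
    exact hy0 ((mem_torsionBySet_iff _ _).mp he ⟨r, (mem_maximalIdeal r).mpr hr⟩)
  exact (smul_mem_iff_of_isUnit _ hr).mp hyι

theorem finite_of_isTorsionBySet_of_matlisEval_surjective (hι : Function.Injective ι)
    (hsoc : torsionBySet R E (maximalIdeal R) ≤ LinearMap.range ι) {W : Type u}
    [AddCommGroup W] [Module R W] (hW : Module.IsTorsionBySet R W (maximalIdeal R))
    (hsurj : Function.Surjective (matlisEval R E W)) : Module.Finite R W := by
  have hWdual : Module.IsTorsionBySet R (W →ₗ[R] E) (maximalIdeal R) := fun g a =>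
    LinearMap.ext fun x => by
      rw [LinearMap.smul_apply, ← map_smul, @hW x a, map_zero, LinearMap.zero_apply]
  let dual : (W →ₗ[R] R ⧸ maximalIdeal R) ≃ₗ[R] (W →ₗ[R] E) :=
    .ofBijective _ (bijective_compRight_of_torsionBySet_le_range hι hsoc hW)
  let dualDual :
      ((W →ₗ[R] E) →ₗ[R] E) ≃ₗ[R] ((W →ₗ[R] R ⧸ maximalIdeal R) →ₗ[R] R ⧸ maximalIdeal R) :=
    (LinearEquiv.ofBijective _
      (bijective_compRight_of_torsionBySet_le_range hι hsoc hWdual)).symm.trans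
        (dual.symm.arrowCongr (.refl R _))
  let _ : Field (R ⧸ maximalIdeal R) := Ideal.Quotient.field _
  let _ := hW.module
  have _ := hW.isScalarTower (S := R)
  have : Module.Finite (R ⧸ maximalIdeal R) W :=
    Module.Finite.of_surjective_restrictScalars_dual_dual Ideal.Quotient.mk_surjective
      (f := dualDual.toLinearMap ∘ₗ matlisEval R E W) (dualDual.surjective.comp hsurj)
  exact Module.Finite.trans (R ⧸ maximalIdeal R) W

end Matlis

section RadicalFull

variable [IsLocalRing R] {A : Type v} [AddCommGroup A] [Module R A]

theorem le_radicalFullPart {V : Submodule R A} (hV : V = maximalIdeal R • V) :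
    V ≤ radicalFullPart R A :=
  le_sSup hV

theorem radicalFullPart_eq_smul :
    radicalFullPart R A = maximalIdeal R • radicalFullPart R A := by
  refine le_antisymm (sSup_le fun V hV => ?_) smul_le_right
  rw [hV]
  exact smul_mono le_rfl (le_radicalFullPart hV)

theorem eq_bot_of_eq_smul_of_quotient_radicalFullPart
    {V : Submodule R (A ⧸ radicalFullPart R A)} (hV : V = maximalIdeal R • V) : V = ⊥ := by
  set U := V.comap (radicalFullPart R A).mkQ
  have hPU : radicalFullPart R A ≤ U :=
    (radicalFullPart R A).ker_mkQ ▸ LinearMap.ker_le_comap _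
  have hUV : U.map (radicalFullPart R A).mkQ = V :=
    map_comap_eq_of_surjective (mkQ_surjective _) V
  have hU : U = maximalIdeal R • U := calc
    U = ((maximalIdeal R • U).map (radicalFullPart R A).mkQ).comap (radicalFullPart R A).mkQ := by
      rw [map_smul'', hUV, ← hV]
    _ = radicalFullPart R A ⊔ maximalIdeal R • U := comap_map_mkQ _ _
    _ = maximalIdeal R • U := by
      rw [radicalFullPart_eq_smul, ← smul_sup, sup_eq_right.mpr hPU]
  rw [← hUV, le_antisymm (le_radicalFullPart hU) hPU, mkQ_map_self]

end RadicalFull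

end

theorem stmt_3 [IsLocalRing R]
    (E : Type u) [AddCommGroup E] [Module R E]
    (hE : IsInjectiveHull R (R ⧸ maximalIdeal R) E)
    (A : Type u) [AddCommGroup A] [Module R A]
    (hA : IsMatlisReflexive R E A) :
    Module.Finite R (A ⧸ radicalFullPart R A) := by
  obtain ⟨_, ι, hι, hess⟩ := hE
  set B := A ⧸ radicalFullPart R A
  have hB : Function.Surjective (matlisEval R E B) :=
    matlisEval_surjective_of_surjective (Submodule.mkQ_surjective _) hA.2
  have : Module.Finite R (B ⧸ maximalIdeal R • (⊤ : Submodule R B)) :=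
    finite_of_isTorsionBySet_of_matlisEval_surjective hι (torsionBySet_maximalIdeal_le_range hess)
      (Module.isTorsionBySet_quotient_ideal_smul B _)
      (matlisEval_surjective_of_surjective (Submodule.mkQ_surjective _) hB)
  obtain ⟨F, hFfg, hF⟩ := Submodule.exists_fg_sup_eq_top (maximalIdeal R • (⊤ : Submodule R B))
  obtain ⟨V, hV, hFV⟩ := exists_eq_smul_sup_eq_top hι hB F hF
  rw [eq_bot_of_eq_smul_of_quotient_radicalFullPart hV, sup_bot_eq] at hFV
  exact ⟨hFV ▸ hFfg⟩
end

section
/- Let R be a ring, A ⊆ B a pure-essential extension with Z(B) ⊆ A (the singular submodule of B is contained in A). Then every injective submodule X of B is contained in A. -/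
open IsLocalRing Pointwise

universe u v

variable (R : Type u) [CommRing R]

/-! Fix `x ∈ X` and let `I = {r | r • x ∈ A}`. If an ideal `J` meets `I` trivially, then `J x`
lies in the injective `X` and meets `A` trivially, so `J x ↪ B ⧸ A` extends to `B ⧸ A → X`. This
yields an endomorphism `ρ` of `B` which is the identity on `J x` and kills `A`; then `id - ρ`
descends to `B ⧸ J x → B` and inverts the quotient map on `A`, so `A` stays pure modulo `J x`, and
pure-essentiality forces `J x = 0`, i.e. `J = 0`.
Thus `I` is essential. As `I` is finitely generated, purity lifts `x + A`, which `I` kills, to some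
`x - y` with `y ∈ A` and `I (x - y) = 0`; then `x - y` is singular, hence in `A`, and so is `x`. -/

section

variable {R}

open scoped TensorProduct

theorem IsPureSubmodule.map_of_leftInvOn {B B' : Type v} [AddCommGroup B] [Module R B]
    [AddCommGroup B'] [Module R B'] {A : Submodule R B} (hA : IsPureSubmodule R A)
    (f : B →ₗ[R] B') (ψ : B' →ₗ[R] B) (hψ : Set.LeftInvOn ψ f A) :
    IsPureSubmodule R (A.map f) := by
  intro X _ _ u v huv
  have hsurj := LinearMap.lTensor_surjective X (f.submoduleMap_surjective A)
  obtain ⟨u, rfl⟩ := hsurj u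
  obtain ⟨v, rfl⟩ := hsurj v
  have hcomp : ψ ∘ₗ (A.map f).subtype ∘ₗ f.submoduleMap A = A.subtype :=
    LinearMap.ext fun a => hψ a.2
  have hfactor : ∀ w, (ψ.lTensor X) ((A.map f).subtype.lTensor X (f.submoduleMap A |>.lTensor X w))
      = A.subtype.lTensor X w := fun w => by
    rw [← hcomp, LinearMap.lTensor_comp, LinearMap.lTensor_comp]; rfl
  exact congrArg _ (hA X (by rw [← hfactor, ← hfactor, huv]))

theorem IsPureSubmodule.exists_forall_smul_eq_smul {B : Type u} [AddCommGroup B] [Module R B]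
    {A : Submodule R B} (hA : IsPureSubmodule R A) {n : ℕ} (a : Fin n → R) {x : B}
    (hx : ∀ i, a i • x ∈ A) : ∃ y ∈ A, ∀ i, a i • x = a i • y := by
  -- `s = ∑ eᵢ ⊗ aᵢx` becomes `a ⊗ x` in `Rⁿ ⊗ B`, which dies in `(Rⁿ ⧸ R a) ⊗ B`; by purity
  -- `s` dies in `(Rⁿ ⧸ R a) ⊗ A`, so by right exactness `s = a ⊗ y` for some `y ∈ A`.
  let e : ∀ (N : Type u) [AddCommGroup N] [Module R N], (Fin n → R) ⊗[R] N ≃ₗ[R] (Fin n → N) :=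
    fun N _ _ => TensorProduct.comm R _ N ≪≫ₗ TensorProduct.piScalarRight R R N (Fin n)
  have he : ∀ (N : Type u) [AddCommGroup N] [Module R N] (p : Fin n → R) (y : N),
      e N (p ⊗ₜ y) = fun i => p i • y := fun N _ _ p y => by simp [e]
  let f := LinearMap.toSpanSingleton R (Fin n → R) a
  let K := LinearMap.range f
  let s := (e A).symm fun i => ⟨a i • x, hx i⟩
  have hs : A.subtype.lTensor _ s = a ⊗ₜ x := by
    have hnat : (e B).toLinearMap ∘ₗ A.subtype.lTensor _ =
        LinearMap.compLeft A.subtype (Fin n) ∘ₗ (e A).toLinearMap :=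
      TensorProduct.ext' fun p y => by
        simp only [LinearMap.comp_apply, LinearEquiv.coe_coe, LinearMap.lTensor_tmul, he]
        rfl
    apply (e B).injective
    rw [← LinearEquiv.coe_coe, ← LinearMap.comp_apply, hnat]
    simp only [LinearMap.comp_apply, LinearEquiv.coe_coe, LinearEquiv.apply_symm_apply, s, he]
    rfl
  have ht : K.mkQ.rTensor A s = 0 := by
    refine hA _ ?_
    rw [map_zero, ← LinearMap.comp_apply, LinearMap.lTensor_comp_rTensor,
      ← LinearMap.rTensor_comp_lTensor, LinearMap.comp_apply, hs, LinearMap.rTensor_tmul,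
      Submodule.mkQ_apply, (Submodule.Quotient.mk_eq_zero K).2 ⟨1, one_smul R a⟩,
      TensorProduct.zero_tmul]
  obtain ⟨u, hu⟩ := (rTensor_exact A (LinearMap.exact_map_mkQ_range f)
    K.mkQ_surjective s).1 ht
  refine ⟨TensorProduct.lid R A u, (TensorProduct.lid R A u).2, fun i => ?_⟩
  rw [← (TensorProduct.lid R A).symm_apply_apply u, TensorProduct.lid_symm_apply,
    LinearMap.rTensor_tmul] at hu
  have hi := congrFun (congrArg (e A) hu) i
  rw [he, LinearEquiv.apply_symm_apply] at hi
  simpa [f] using congrArg Subtype.val hi.symm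

theorem IsPureSubmodule.exists_le_annihilator_sub {B : Type u} [AddCommGroup B] [Module R B]
    {A : Submodule R B} (hA : IsPureSubmodule R A) {I : Ideal R} (hI : I.FG) {x : B}
    (hx : ∀ r ∈ I, r • x ∈ A) : ∃ y ∈ A, I ≤ (Submodule.span R {x - y}).annihilator := by
  obtain ⟨n, a, rfl⟩ := Submodule.fg_iff_exists_fin_generating_family.1 hI
  obtain ⟨y, hyA, hy⟩ := hA.exists_forall_smul_eq_smul a fun i =>
    hx _ (Submodule.subset_span (Set.mem_range_self i))
  refine ⟨y, hyA, Submodule.span_le.2 ?_⟩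
  rintro _ ⟨i, rfl⟩
  rw [SetLike.mem_coe, Submodule.mem_annihilator_span_singleton, smul_sub, hy i, sub_self]

theorem IsPureEssential.eq_bot_of_eqOn_of_le_ker {B : Type v} [AddCommGroup B] [Module R B]
    {A : Submodule R B} (hA : IsPureEssential R A) (E : Submodule R B) (ρ : Module.End R B)
    (hE : Set.EqOn ρ id E) (hAρ : A ≤ LinearMap.ker ρ) : E = ⊥ := by
  have hEA : E ⊓ A = ⊥ := by
    refine eq_bot_iff.2 fun y ⟨hyE, hyA⟩ => ?_
    rw [Submodule.mem_bot, ← id_eq y, ← hE hyE]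
    exact hAρ hyA
  refine hA.2 E hEA (hA.1.map_of_leftInvOn E.mkQ (E.liftQ (LinearMap.id - ρ) ?_) ?_)
  · intro y hy
    simp [LinearMap.mem_ker, hE hy]
  · intro a ha
    have hρa : ρ a = 0 := hAρ ha
    simp [hρa]

theorem IsPureEssential.eq_bot_of_le_of_inf_eq_bot {B : Type v} [AddCommGroup B] [Module R B]
    {A : Submodule R B} (hA : IsPureEssential R A) {X : Submodule R B}
    (hX : Module.Injective R X) {Y : Submodule R B} (hYX : Y ≤ X) (hYA : Y ⊓ A = ⊥) :
    Y = ⊥ := by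
  have hf : Function.Injective (A.mkQ ∘ₗ Y.subtype) := by
    rw [← LinearMap.ker_eq_bot, LinearMap.ker_comp, Submodule.ker_mkQ,
      ← Submodule.disjoint_iff_comap_eq_bot, disjoint_iff, hYA]
  obtain ⟨g, hg⟩ := hX.out _ hf (Submodule.inclusion hYX)
  refine hA.eq_bot_of_eqOn_of_le_ker Y (X.subtype ∘ₗ g ∘ₗ A.mkQ) (fun y hy => ?_) (fun a ha => ?_)
  · simpa using congrArg Subtype.val (hg ⟨y, hy⟩)
  · simp [(Submodule.Quotient.mk_eq_zero A).2 ha]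

theorem IsPureEssential.inf_comap_toSpanSingleton_ne_bot {B : Type v} [AddCommGroup B]
    [Module R B] {A : Submodule R B} (hA : IsPureEssential R A) {X : Submodule R B}
    (hX : Module.Injective R X) {x : B} (hx : x ∈ X) {J : Ideal R} (hJ : J ≠ ⊥) :
    A.comap (LinearMap.toSpanSingleton R B x) ⊓ J ≠ ⊥ := by
  intro hIJ
  have hJx : Submodule.map (LinearMap.toSpanSingleton R B x) J = ⊥ := by
    refine hA.eq_bot_of_le_of_inf_eq_bot hX ?_ (eq_bot_iff.2 ?_)
    · rintro _ ⟨r, -, rfl⟩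
      exact X.smul_mem r hx
    · rintro _ ⟨⟨r, hrJ, rfl⟩, hrA⟩
      have hr : r ∈ A.comap (LinearMap.toSpanSingleton R B x) ⊓ J := ⟨hrA, hrJ⟩
      rw [hIJ, Submodule.mem_bot] at hr
      simp [hr]
  refine hJ (eq_bot_iff.2 fun r hrJ => ?_)
  have hrx : r • x = 0 := by
    simpa [hJx] using Submodule.mem_map_of_mem (f := LinearMap.toSpanSingleton R B x) hrJ
  rw [← hIJ]
  exact ⟨by simp [hrx], hrJ⟩

end

theorem stmt_8 [IsNoetherianRing R]
    {B : Type u} [AddCommGroup B] [Module R B] (A : Submodule R B)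
    (hA : IsPureEssential R A)
    (hZ : ∀ x : B,
      (∀ J : Ideal R, J ≠ ⊥ → (Submodule.span R {x}).annihilator ⊓ J ≠ ⊥) → x ∈ A)
    (X : Submodule R B) (hX : Module.Injective R X) :
    X ≤ A := by
  intro x hx
  obtain ⟨y, hyA, hIy⟩ := hA.1.exists_le_annihilator_sub
    (IsNoetherian.noetherian (A.comap (LinearMap.toSpanSingleton R B x))) (x := x) fun _ => id
  have hxy : x - y ∈ A := hZ _ fun J hJ hJ0 =>
    hA.inf_comap_toSpanSingleton_ne_bot hX hx hJ (eq_bot_iff.2 (hJ0 ▸ inf_le_inf_right J hIy))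
  simpa using add_mem hxy hyA
end
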